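/- arXiv:2006.02223 — 2 statements merged into one kernel-verified Lean document; each statement's English description precedes it below -/
import Mathlib

section
/- Let (C,E,s) be an n-exangulated category and let α ∈ C(A,B) and h ∈ C(A,C) be any pair of morphisms. If α is an inflation, then the morphism with components −α and h from A to B ⊕ C (i.e. the column matrix [−α; h] : A → B ⊕ C) is also an inflation. -/
open CategoryTheory CategoryTheory.Limits Opposite ZeroObject

universe v u

/-- A sequence of composable morphisms in `C`, indexed by `ℕ`.
For a complex of length `n+2` we only use the objects `0,…,n+1` and maps `0,…,n`. -/
structure ExSeq (C : Type u) [Category.{v} C] : Type max u v where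
  obj : ℕ → C
  map : ∀ i : ℕ, obj i ⟶ obj (i + 1)

/-- A morphism of sequences, where only the components `0,…,n+1` (and the
commutativity of the squares involving the maps `0,…,n`) are relevant. -/
structure ExSeqHom {C : Type u} [Category.{v} C] (n : ℕ) (X Y : ExSeq C) :
    Type max u v where
  hom : ∀ i, X.obj i ⟶ Y.obj i
  comm : ∀ i, i ≤ n → X.map i ≫ hom (i + 1) = hom i ≫ Y.map i

/-- The data of an `n`-exangulated category: an additive bifunctor
`E : Cᵒᵖ × C ⥤ Ab` together with a predicate singling out the distinguished
`n`-exangles, i.e. the pairs `⟨X, δ⟩` with `s(δ) = [X]`. -/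
structure ExData (n : ℕ) (C : Type u) [Category.{v} C] [Preadditive C] :
    Type max u (v + 1) where
  E : Cᵒᵖ ⥤ C ⥤ AddCommGrpCat.{v}
  Dist : ∀ X : ExSeq C, ((E.obj (op (X.obj (n + 1)))).obj (X.obj 0)) → Prop

namespace ExData

variable {n : ℕ} {C : Type u} [Category.{v} C] [Preadditive C] (S : ExData n C)

/-- `S.Ext Cc A` is the group `E(Cc, A)` of `E`-extensions. -/
abbrev Ext (Cc A : C) : Type v := (S.E.obj (op Cc)).obj A

/-- `a_* δ`, the pushforward of an `E`-extension along `a : A ⟶ A'`. -/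
def push {Cc A A' : C} (a : A ⟶ A') (δ : S.Ext Cc A) : S.Ext Cc A' :=
  ((S.E.obj (op Cc)).map a) δ

/-- `c^* δ`, the pullback of an `E`-extension along `c : Cc' ⟶ Cc`. -/
def pull {Cc' Cc A : C} (c : Cc' ⟶ Cc) (δ : S.Ext Cc A) : S.Ext Cc' A :=
  ((S.E.map c.op).app A) δ

/-- `f` is an inflation if it occurs as the `0`-th differential of a
distinguished `n`-exangle. -/
def IsInflation {A B : C} (f : A ⟶ B) : Prop :=
  ∃ (X : ExSeq C) (δ : S.Ext (X.obj (n + 1)) (X.obj 0)), S.Dist X δ ∧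
    ∃ (h0 : X.obj 0 = A) (h1 : X.obj 1 = B),
      X.map 0 = eqToHom h0 ≫ f ≫ eqToHom h1.symm

/-- `f` is a deflation if it occurs as the `n`-th differential of a
distinguished `n`-exangle. -/
def IsDeflation {A B : C} (f : A ⟶ B) : Prop :=
  ∃ (X : ExSeq C) (δ : S.Ext (X.obj (n + 1)) (X.obj 0)), S.Dist X δ ∧
    ∃ (h0 : X.obj n = A) (h1 : X.obj (n + 1) = B),
      X.map n = eqToHom h0 ≫ f ≫ eqToHom h1.symm

/-- Projective objects. -/
def Proj (P : C) : Prop :=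
  ∀ (X : ExSeq C) (δ : S.Ext (X.obj (n + 1)) (X.obj 0)), S.Dist X δ →
    ∀ c : P ⟶ X.obj (n + 1), ∃ b : P ⟶ X.obj n, b ≫ X.map n = c

/-- Injective objects. -/
def Inj (I : C) : Prop :=
  ∀ (X : ExSeq C) (δ : S.Ext (X.obj (n + 1)) (X.obj 0)), S.Dist X δ →
    ∀ c : X.obj 0 ⟶ I, ∃ b : X.obj 1 ⟶ I, X.map 0 ≫ b = c

/-- `C` has enough projectives. -/
def EnoughProj : Prop :=
  ∀ Cc : C, ∃ (X : ExSeq C) (δ : S.Ext (X.obj (n + 1)) (X.obj 0)),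
    S.Dist X δ ∧ X.obj (n + 1) = Cc ∧ ∀ i, 1 ≤ i → i ≤ n → S.Proj (X.obj i)

/-- `C` has enough injectives. -/
def EnoughInj : Prop :=
  ∀ A : C, ∃ (X : ExSeq C) (δ : S.Ext (X.obj (n + 1)) (X.obj 0)),
    S.Dist X δ ∧ X.obj 0 = A ∧ ∀ i, 1 ≤ i → i ≤ n → S.Inj (X.obj i)

end ExData

section Cone

variable (n : ℕ) {C : Type u} [Category.{v} C] [Preadditive C] [HasBinaryBiproducts C]

/-- `M` is the mapping cone of a morphism `f : X ⟶ Y` of `n`-exangles whose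
`0`-th component is (up to the identifications) an identity. -/
structure IsCone {X Y : ExSeq C} (f : ExSeqHom n X Y) (M : ExSeq C) : Prop where
  h0 : M.obj 0 = X.obj 1
  hlast : M.obj (n + 1) = Y.obj (n + 1)
  hmid : ∀ i, i + 1 ≤ n → M.obj (i + 1) = (X.obj (i + 2) ⊞ Y.obj (i + 1))
  map0 : ∀ h : 1 ≤ n, M.map 0 =
    eqToHom h0 ≫ biprod.lift (-(X.map 1)) (f.hom 1) ≫ eqToHom (hmid 0 h).symm
  mapmid : ∀ i (h : i + 2 ≤ n), M.map (i + 1) =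
    eqToHom (hmid i (by omega)) ≫
      biprod.desc (biprod.lift (-(X.map (i + 2))) (f.hom (i + 2)))
        (biprod.lift 0 (Y.map (i + 1))) ≫ eqToHom (hmid (i + 1) h).symm
  maplast : ∀ i (h : i + 1 = n), M.map (i + 1) =
    eqToHom (hmid i (by omega)) ≫ biprod.desc (f.hom (i + 2)) (Y.map (i + 1)) ≫
      eqToHom (show Y.obj (i + 2) = M.obj (i + 2) from by subst h; exact hlast.symm)

/-- `N` is the mapping cocone of a morphism `g : Y ⟶ X` of `n`-exangles whose
`(n+1)`-st component is (up to the identifications) an identity. -/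
structure IsCocone {Y X : ExSeq C} (g : ExSeqHom n Y X) (N : ExSeq C) : Prop where
  h0 : N.obj 0 = Y.obj 0
  hlast : N.obj (n + 1) = X.obj n
  hmid : ∀ i, i + 1 ≤ n → N.obj (i + 1) = (Y.obj (i + 1) ⊞ X.obj i)
  map0 : ∀ h : 1 ≤ n, N.map 0 =
    eqToHom h0 ≫ biprod.lift (-(Y.map 0)) (g.hom 0) ≫ eqToHom (hmid 0 h).symm
  mapmid : ∀ i (h : i + 2 ≤ n), N.map (i + 1) =
    eqToHom (hmid i (by omega)) ≫
      biprod.desc (biprod.lift (-(Y.map (i + 1))) (g.hom (i + 1)))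
        (biprod.lift 0 (X.map i)) ≫ eqToHom (hmid (i + 1) h).symm
  maplast : ∀ i (h : i + 1 = n), N.map (i + 1) =
    eqToHom (hmid i (by omega)) ≫ biprod.desc (g.hom (i + 1)) (X.map i) ≫
      eqToHom (show X.obj (i + 1) = N.obj (i + 2) from by subst h; exact hlast.symm)

end Cone

/-- The axioms (R0), (R1), (R2), (EA1), (EA2), (EA2ᵒᵖ) for the data of an
`n`-exangulated category, following Herschend–Liu–Nakaoka. -/
structure IsExangulated {n : ℕ} {C : Type u} [Category.{v} C] [Preadditive C]
    [HasBinaryBiproducts C] (S : ExData n C) : Prop where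
  /-- `E` is additive in the contravariant variable. -/
  additive_left : S.E.Additive
  /-- `E` is additive in the covariant variable. -/
  additive_right : ∀ X : Cᵒᵖ, (S.E.obj X).Additive
  /-- every `E`-extension admits a realization. -/
  realize : ∀ (A Cc : C) (δ : S.Ext Cc A), ∃ (X : ExSeq C)
    (h0 : X.obj 0 = A) (h1 : X.obj (n + 1) = Cc),
      S.Dist X (S.push (eqToHom h0.symm) (S.pull (eqToHom h1) δ))
  /-- (R0): morphisms of `E`-extensions lift to morphisms of realizations. -/
  lift : ∀ (X Y : ExSeq C) (δX : S.Ext (X.obj (n + 1)) (X.obj 0))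
    (δY : S.Ext (Y.obj (n + 1)) (Y.obj 0)), S.Dist X δX → S.Dist Y δY →
    ∀ (a : X.obj 0 ⟶ Y.obj 0) (c : X.obj (n + 1) ⟶ Y.obj (n + 1)),
      S.push a δX = S.pull c δY →
      ∃ f : ExSeqHom n X Y, f.hom 0 = a ∧ f.hom (n + 1) = c
  /-- (R1), covariant part, middle. -/
  ex_cov_mid : ∀ (X : ExSeq C) (δ : S.Ext (X.obj (n + 1)) (X.obj 0)), S.Dist X δ →
    ∀ i, i + 1 ≤ n → ∀ (Z : C) (g : Z ⟶ X.obj (i + 1)),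
      (g ≫ X.map (i + 1) = 0 ↔ ∃ h : Z ⟶ X.obj i, h ≫ X.map i = g)
  /-- (R1), covariant part, last position. -/
  ex_cov_last : ∀ (X : ExSeq C) (δ : S.Ext (X.obj (n + 1)) (X.obj 0)), S.Dist X δ →
    ∀ (Z : C) (g : Z ⟶ X.obj (n + 1)),
      (S.pull g δ = 0 ↔ ∃ h : Z ⟶ X.obj n, h ≫ X.map n = g)
  /-- (R1), contravariant part, middle. -/
  ex_con_mid : ∀ (X : ExSeq C) (δ : S.Ext (X.obj (n + 1)) (X.obj 0)), S.Dist X δ →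
    ∀ i, i + 1 ≤ n → ∀ (Z : C) (g : X.obj (i + 1) ⟶ Z),
      (X.map i ≫ g = 0 ↔ ∃ h : X.obj (i + 2) ⟶ Z, X.map (i + 1) ≫ h = g)
  /-- (R1), contravariant part, last position. -/
  ex_con_last : ∀ (X : ExSeq C) (δ : S.Ext (X.obj (n + 1)) (X.obj 0)), S.Dist X δ →
    ∀ (Z : C) (g : X.obj 0 ⟶ Z),
      (S.push g δ = 0 ↔ ∃ h : X.obj 1 ⟶ Z, X.map 0 ≫ h = g)
  /-- (R2): the trivial complex `A = A → 0 → ⋯ → 0` realizes `0 ∈ E(0, A)`. -/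
  r2 : ∀ A : C, ∃ (X : ExSeq C) (h0 : X.obj 0 = A) (h1 : X.obj 1 = A),
    X.map 0 = eqToHom (h0.trans h1.symm) ∧
    (∀ i, 2 ≤ i → i ≤ n + 1 → IsZero (X.obj i)) ∧ S.Dist X 0
  /-- (R2)ᵒᵖ: the trivial complex `0 → ⋯ → 0 → A = A` realizes `0 ∈ E(A, 0)`. -/
  r2' : ∀ A : C, ∃ (X : ExSeq C) (h0 : X.obj n = A) (h1 : X.obj (n + 1) = A),
    X.map n = eqToHom (h0.trans h1.symm) ∧
    (∀ i, i + 1 ≤ n → IsZero (X.obj i)) ∧ S.Dist X 0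
  /-- (EA1): inflations are closed under composition. -/
  comp_infl : ∀ {A B D : C} (f : A ⟶ B) (g : B ⟶ D),
    S.IsInflation f → S.IsInflation g → S.IsInflation (f ≫ g)
  /-- (EA1): deflations are closed under composition. -/
  comp_defl : ∀ {A B D : C} (f : A ⟶ B) (g : B ⟶ D),
    S.IsDeflation f → S.IsDeflation g → S.IsDeflation (f ≫ g)
  /-- (EA2): good lifts of `(id, c)` exist. -/
  ea2 : ∀ (X Y : ExSeq C) (ρ : S.Ext (Y.obj (n + 1)) (Y.obj 0))
    (hA : X.obj 0 = Y.obj 0) (c : X.obj (n + 1) ⟶ Y.obj (n + 1)),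
    S.Dist Y ρ → S.Dist X (S.push (eqToHom hA.symm) (S.pull c ρ)) →
    ∃ (f : ExSeqHom n X Y) (_ : f.hom 0 = eqToHom hA) (_ : f.hom (n + 1) = c)
      (M : ExSeq C) (hM : IsCone n f M),
      S.Dist M (S.push (eqToHom hM.h0.symm)
        (S.pull (eqToHom hM.hlast) (S.push (eqToHom hA.symm ≫ X.map 0) ρ)))
  /-- (EA2)ᵒᵖ: good lifts of `(a, id)` exist. -/
  ea2op : ∀ (Y X : ExSeq C) (ρ : S.Ext (Y.obj (n + 1)) (Y.obj 0))
    (hC : Y.obj (n + 1) = X.obj (n + 1)) (a : Y.obj 0 ⟶ X.obj 0),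
    S.Dist Y ρ → S.Dist X (S.push a (S.pull (eqToHom hC.symm) ρ)) →
    ∃ (g : ExSeqHom n Y X) (_ : g.hom 0 = a) (_ : g.hom (n + 1) = eqToHom hC)
      (N : ExSeq C) (hN : IsCocone n g N),
      S.Dist N (S.push (eqToHom hN.h0.symm)
        (S.pull (eqToHom hN.hlast ≫ X.map n ≫ eqToHom hC.symm) ρ))
section Quot

variable {C : Type u} [Category.{v} C] [Preadditive C] [HasZeroObject C]
  [HasBinaryBiproducts C]

/-- A (full) additive subcategory of `C`, given by a class of objects closed
under isomorphisms, finite direct sums and containing the zero objects. -/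
structure AddSubcat (C : Type u) [Category.{v} C] [Preadditive C]
    [HasZeroObject C] [HasBinaryBiproducts C] : Type max u v where
  mem : C → Prop
  zero_mem : ∀ Z : C, IsZero Z → mem Z
  iso_mem : ∀ {A B : C}, (A ≅ B) → mem A → mem B
  sum_mem : ∀ {A B : C}, mem A → mem B → mem (A ⊞ B)

variable (𝒳 : AddSubcat C)

/-- `f : A ⟶ B` is `𝒳`-monic. -/
def XMonic {A B : C} (f : A ⟶ B) : Prop :=
  ∀ M : C, 𝒳.mem M → ∀ g : A ⟶ M, ∃ h : B ⟶ M, f ≫ h = g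

/-- `f : A ⟶ B` is `𝒳`-epic. -/
def XEpic {A B : C} (f : A ⟶ B) : Prop :=
  ∀ M : C, 𝒳.mem M → ∀ g : M ⟶ B, ∃ h : M ⟶ A, h ≫ f = g

/-- `f : A ⟶ B` is a left `𝒳`-approximation of `A`. -/
def LeftApprox {A B : C} (f : A ⟶ B) : Prop := 𝒳.mem B ∧ XMonic 𝒳 f

/-- `f : A ⟶ B` is a right `𝒳`-approximation of `B`. -/
def RightApprox {A B : C} (f : A ⟶ B) : Prop := 𝒳.mem A ∧ XEpic 𝒳 f

/-- The ideal `[𝒳](A,B)` of morphisms factoring through an object of `𝒳`. -/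
def homIdeal (A B : C) : AddSubgroup (A ⟶ B) where
  carrier := {f | ∃ M : C, 𝒳.mem M ∧ ∃ (g : A ⟶ M) (h : M ⟶ B), g ≫ h = f}
  zero_mem' := ⟨(0 : C), 𝒳.zero_mem (0 : C) (isZero_zero C), 0, 0, by simp⟩
  add_mem' := by
    rintro f f' ⟨M, hM, g, h, rfl⟩ ⟨M', hM', g', h', rfl⟩
    exact ⟨M ⊞ M', 𝒳.sum_mem hM hM', biprod.lift g g', biprod.desc h h', by simp⟩
  neg_mem' := by
    rintro f ⟨M, hM, g, h, rfl⟩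
    exact ⟨M, hM, -g, h, by simp⟩

lemma homIdeal.comp_right {A B B' : C} {f : A ⟶ B} (hf : f ∈ homIdeal 𝒳 A B)
    (u : B ⟶ B') : f ≫ u ∈ homIdeal 𝒳 A B' := by
  obtain ⟨M, hM, g, h, rfl⟩ := hf
  exact ⟨M, hM, g, h ≫ u, by simp⟩

lemma homIdeal.comp_left {A' A B : C} {f : A ⟶ B} (hf : f ∈ homIdeal 𝒳 A B)
    (u : A' ⟶ A) : u ≫ f ∈ homIdeal 𝒳 A' B := by
  obtain ⟨M, hM, g, h, rfl⟩ := hf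
  exact ⟨M, hM, u ≫ g, h, by simp⟩

/-- The objects of the quotient category `C/𝒳`. -/
@[ext]
structure QuotObj (𝒳 : AddSubcat C) : Type u where
  as : C

/-- The quotient (additive) category `C/𝒳`. -/
instance QuotObj.category : Category.{v} (QuotObj 𝒳) where
  Hom A B := (A.as ⟶ B.as) ⧸ homIdeal 𝒳 A.as B.as
  id A := QuotientAddGroup.mk (𝟙 A.as)
  comp {A B D} f g := Quotient.liftOn₂ f g
    (fun f g => QuotientAddGroup.mk (f ≫ g))
    (by
      intro a₁ a₂ b₁ b₂ h₁ h₂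
      replace h₁ := QuotientAddGroup.leftRel_apply.mp h₁
      replace h₂ := QuotientAddGroup.leftRel_apply.mp h₂
      show QuotientAddGroup.mk (a₁ ≫ a₂) = QuotientAddGroup.mk (b₁ ≫ b₂)
      rw [QuotientAddGroup.eq]
      have heq : -(a₁ ≫ a₂) + b₁ ≫ b₂ =
          (-a₁ + b₁) ≫ a₂ + b₁ ≫ (-a₂ + b₂) := by
        simp only [Preadditive.add_comp, Preadditive.comp_add,
          Preadditive.neg_comp, Preadditive.comp_neg]
        abel
      rw [heq]
      exact (homIdeal 𝒳 _ _).add_mem (homIdeal.comp_right 𝒳 h₁ a₂)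
        (homIdeal.comp_left 𝒳 h₂ b₁))
  id_comp f := by
    induction f using Quotient.inductionOn
    exact congrArg _ (Category.id_comp _)
  comp_id f := by
    induction f using Quotient.inductionOn
    exact congrArg _ (Category.comp_id _)
  assoc f g h := by
    induction f using Quotient.inductionOn
    induction g using Quotient.inductionOn
    induction h using Quotient.inductionOn
    exact congrArg _ (Category.assoc _ _ _)

instance QuotObj.preadditive : Preadditive (QuotObj 𝒳) where
  homGroup A B := inferInstanceAs (AddCommGroup ((A.as ⟶ B.as) ⧸ homIdeal 𝒳 A.as B.as))
  add_comp A B D f f' g := by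
    induction f using Quotient.inductionOn
    induction f' using Quotient.inductionOn
    induction g using Quotient.inductionOn
    exact congrArg _ (Preadditive.add_comp _ _ _ _ _ _)
  comp_add A B D f g g' := by
    induction f using Quotient.inductionOn
    induction g using Quotient.inductionOn
    induction g' using Quotient.inductionOn
    exact congrArg _ (Preadditive.comp_add _ _ _ _ _ _)

/-- The quotient functor `C ⥤ C/𝒳`. -/
def quotFunctor : C ⥤ QuotObj 𝒳 where
  obj A := ⟨A⟩
  map f := QuotientAddGroup.mk f
  map_id _ := rfl
  map_comp _ _ := rfl

end Quot

section QuotBiprod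

variable {C : Type u} [Category.{v} C] [Preadditive C] [HasZeroObject C]
  [HasBinaryBiproducts C] (𝒳 : AddSubcat C)

instance QuotObj.hasBinaryBiproducts : HasBinaryBiproducts (QuotObj 𝒳) := by
  apply HasBinaryBiproducts.mk
  intro A B
  apply HasBinaryBiproduct.mk
  refine ⟨{ pt := ⟨A.as ⊞ B.as⟩
            fst := QuotientAddGroup.mk biprod.fst
            snd := QuotientAddGroup.mk biprod.snd
            inl := QuotientAddGroup.mk biprod.inl
            inr := QuotientAddGroup.mk biprod.inr
            inl_fst := ?_, inl_snd := ?_, inr_fst := ?_, inr_snd := ?_ }, ?_⟩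
  · show QuotientAddGroup.mk (biprod.inl ≫ biprod.fst) =
      QuotientAddGroup.mk (𝟙 A.as)
    rw [biprod.inl_fst]
  · show QuotientAddGroup.mk (biprod.inl ≫ biprod.snd) = _
    rw [biprod.inl_snd]; rfl
  · show QuotientAddGroup.mk (biprod.inr ≫ biprod.fst) = _
    rw [biprod.inr_fst]; rfl
  · show QuotientAddGroup.mk (biprod.inr ≫ biprod.snd) =
      QuotientAddGroup.mk (𝟙 B.as)
    rw [biprod.inr_snd]
  · apply isBinaryBilimitOfTotal
    show QuotientAddGroup.mk (biprod.fst ≫ biprod.inl) +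
        QuotientAddGroup.mk (biprod.snd ≫ biprod.inr) =
      QuotientAddGroup.mk (𝟙 (A.as ⊞ B.as))
    rw [show QuotientAddGroup.mk (biprod.fst ≫ biprod.inl) + QuotientAddGroup.mk (biprod.snd ≫ biprod.inr) = (QuotientAddGroup.mk (biprod.fst ≫ biprod.inl + biprod.snd ≫ biprod.inr) : (⟨A.as ⊞ B.as⟩ : QuotObj 𝒳) ⟶ ⟨A.as ⊞ B.as⟩) from rfl]
    rw [biprod.total]

end QuotBiprod
section NAbelian

variable (n : ℕ) {C : Type u} [Category.{v} C] [Preadditive C]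

/-- `g` is a weak cokernel of `f`. -/
def IsWeakCokernel {A B D : C} (f : A ⟶ B) (g : B ⟶ D) : Prop :=
  f ≫ g = 0 ∧ ∀ (Z : C) (h : B ⟶ Z), f ≫ h = 0 → ∃ p : D ⟶ Z, g ≫ p = h

/-- `f` is a weak kernel of `g`. -/
def IsWeakKernel {A B D : C} (f : A ⟶ B) (g : B ⟶ D) : Prop :=
  f ≫ g = 0 ∧ ∀ (Z : C) (h : Z ⟶ B), h ≫ g = 0 → ∃ p : Z ⟶ A, p ≫ f = h

/-- The sequence `S.obj 1 → ⋯ → S.obj (n+1)` is an `n`-cokernel of `S.map 0`,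
i.e. `0 → (S_{n+1}, B) → ⋯ → (S_1, B) → (S_0, B)` is exact for every `B`. -/
def IsNCokernelOf (S : ExSeq C) : Prop :=
  (∀ i, i + 1 ≤ n → ∀ (Z : C) (h : S.obj (i + 1) ⟶ Z),
    (S.map i ≫ h = 0 ↔ ∃ p : S.obj (i + 2) ⟶ Z, S.map (i + 1) ≫ p = h)) ∧
  (∀ (Z : C) (g : S.obj (n + 1) ⟶ Z), S.map n ≫ g = 0 → g = 0)

/-- The sequence `S.obj 0 → ⋯ → S.obj n` is an `n`-kernel of `S.map n`,
i.e. `0 → (B, S_0) → ⋯ → (B, S_n) → (B, S_{n+1})` is exact for every `B`. -/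
def IsNKernelOf (S : ExSeq C) : Prop :=
  (∀ i, i + 1 ≤ n → ∀ (Z : C) (h : Z ⟶ S.obj (i + 1)),
    (h ≫ S.map (i + 1) = 0 ↔ ∃ p : Z ⟶ S.obj i, p ≫ S.map i = h)) ∧
  (∀ (Z : C) (g : Z ⟶ S.obj 0), g ≫ S.map 0 = 0 → g = 0)

/-- `n`-exact sequences. -/
def IsNExactSeq (S : ExSeq C) : Prop := IsNCokernelOf n S ∧ IsNKernelOf n S

/-- The sequence `S` starts with (a copy of) the morphism `f`. -/
def ExSeq.startsWith (S : ExSeq C) {A B : C} (f : A ⟶ B) : Prop :=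
  ∃ (h0 : S.obj 0 = A) (h1 : S.obj 1 = B), S.map 0 = eqToHom h0 ≫ f ≫ eqToHom h1.symm

/-- The sequence `S` ends (at position `n`) with (a copy of) the morphism `f`. -/
def ExSeq.endsWith (n : ℕ) (S : ExSeq C) {A B : C} (f : A ⟶ B) : Prop :=
  ∃ (h0 : S.obj n = A) (h1 : S.obj (n + 1) = B),
    S.map n = eqToHom h0 ≫ f ≫ eqToHom h1.symm

/-- `n`-abelian category, following Jasso: an additive category with split
idempotents in which every morphism has an `n`-kernel and an `n`-cokernel,
every monomorphism is the `0`-th morphism of an `n`-exact sequence, and every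
epimorphism is the `n`-th morphism of an `n`-exact sequence. -/
structure IsNAbelian (n : ℕ) (D : Type u) [Category.{v} D] [Preadditive D] : Prop where
  hasFiniteBiproducts : HasFiniteBiproducts D
  idemSplit : IsIdempotentComplete D
  hasNCokernels : ∀ {A B : D} (f : A ⟶ B),
    ∃ S : ExSeq D, S.startsWith f ∧ IsNCokernelOf n S
  hasNKernels : ∀ {A B : D} (f : A ⟶ B),
    ∃ S : ExSeq D, S.endsWith n f ∧ IsNKernelOf n S
  monoIsNExact : ∀ {A B : D} (f : A ⟶ B), Mono f →
    ∃ S : ExSeq D, S.startsWith f ∧ IsNExactSeq n S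
  epiIsNExact : ∀ {A B : D} (f : A ⟶ B), Epi f →
    ∃ S : ExSeq D, S.endsWith n f ∧ IsNExactSeq n S

end NAbelian

section ClusterTilting

variable {n : ℕ} {C : Type u} [Category.{v} C] [Preadditive C] [HasZeroObject C]
  [HasBinaryBiproducts C]

/-- A cluster tilting subcategory of an `n`-exangulated category. -/
def ExData.ClusterTilting (S : ExData n C) (𝒳 : AddSubcat C) : Prop :=
  (∀ X X' : C, 𝒳.mem X → 𝒳.mem X' → ∀ δ : S.Ext X X', δ = 0) ∧
  (∀ Cc : C, ∃ (X : ExSeq C) (δ : S.Ext (X.obj (n + 1)) (X.obj 0)),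
    S.Dist X δ ∧ X.obj (n + 1) = Cc ∧ ∀ i, i ≤ n → 𝒳.mem (X.obj i)) ∧
  (∀ A : C, ∃ (X : ExSeq C) (δ : S.Ext (X.obj (n + 1)) (X.obj 0)),
    S.Dist X δ ∧ X.obj 0 = A ∧ ∀ i, 1 ≤ i → i ≤ n + 1 → 𝒳.mem (X.obj i))

end ClusterTilting
section Angulated

variable {C : Type u} [Category.{v} C] [Preadditive C]

/-- An `(n+2)`-`Σ`-sequence `A₀ → A₁ → ⋯ → A_{n+1} → Σ A₀`. -/
structure SgSeq (C : Type u) [Category.{v} C] (Sg : C ⥤ C) (n : ℕ) :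
    Type max u v where
  obj : ℕ → C
  map : ∀ i, obj i ⟶ obj (i + 1)
  ext : obj (n + 1) ⟶ Sg.obj (obj 0)

/-- A morphism of `(n+2)`-`Σ`-sequences. -/
structure SgSeqHom {C : Type u} [Category.{v} C] {Sg : C ⥤ C} {n : ℕ}
    (X Y : SgSeq C Sg n) : Type max u v where
  hom : ∀ i, X.obj i ⟶ Y.obj i
  comm : ∀ i, i ≤ n → X.map i ≫ hom (i + 1) = hom i ≫ Y.map i
  comm_ext : X.ext ≫ Sg.map (hom 0) = hom (n + 1) ≫ Y.ext

variable {Sg : C ⥤ C} {n : ℕ}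

/-- `T` is (equal to) the trivial sequence `0 → A = A → 0 → ⋯ → 0`. -/
def IsTrivialSgSeq (A : C) (T : SgSeq C Sg n) : Prop :=
  IsZero (T.obj 0) ∧
  (∃ (h1 : T.obj 1 = A) (h2 : T.obj 2 = A), T.map 1 = eqToHom (h1.trans h2.symm)) ∧
  (∀ i, 3 ≤ i → i ≤ n + 1 → IsZero (T.obj i))

variable [HasBinaryBiproducts C]

/-- `U` is the direct sum of the sequences `X` and `Y`. -/
def IsBiprodSgSeq (X Y U : SgSeq C Sg n) : Prop :=
  ∃ e : ∀ i, i ≤ n + 1 → U.obj i = (X.obj i ⊞ Y.obj i),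
    (∀ i (h : i + 1 ≤ n + 1), U.map i = eqToHom (e i (by omega)) ≫
      biprod.map (X.map i) (Y.map i) ≫ eqToHom (e (i + 1) h).symm) ∧
    U.ext = eqToHom (e (n + 1) le_rfl) ≫
      biprod.desc (X.ext ≫ Sg.map biprod.inl) (Y.ext ≫ Sg.map biprod.inr) ≫
        eqToHom (congrArg Sg.obj (e 0 (by omega)).symm)

/-- `T` is the left rotation of `X`. -/
def IsRotation (X T : SgSeq C Sg n) : Prop :=
  ∃ (e : ∀ i, i ≤ n → T.obj i = X.obj (i + 1)) (el : T.obj (n + 1) = Sg.obj (X.obj 0)),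
    (∀ i (h : i + 1 ≤ n), T.map i = eqToHom (e i (by omega)) ≫ X.map (i + 1) ≫
      eqToHom (e (i + 1) h).symm) ∧
    (T.map n = eqToHom (e n le_rfl) ≫ X.ext ≫ eqToHom el.symm) ∧
    (T.ext = eqToHom el ≫ (((-1 : ℤ) ^ n) • Sg.map (X.map 0)) ≫
      eqToHom (congrArg Sg.obj (e 0 (by omega)).symm))

/-- The axioms (RN1), (RN2), (RN3) of a right `(n+2)`-angulated category. -/
structure RightAngulatedRN123 (Sg : C ⥤ C) (n : ℕ) (Θ : Set (SgSeq C Sg n)) : Prop where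
  /-- (RN1)(a): `Θ` is closed under isomorphisms. -/
  iso_closed : ∀ (X Y : SgSeq C Sg n) (f : SgSeqHom X Y),
    (∀ i, i ≤ n + 1 → IsIso (f.hom i)) → X ∈ Θ → Y ∈ Θ
  /-- (RN1)(a): `Θ` is closed under direct sums. -/
  sum_closed : ∀ X Y U : SgSeq C Sg n, X ∈ Θ → Y ∈ Θ → IsBiprodSgSeq X Y U → U ∈ Θ
  /-- (RN1)(b): the trivial sequences belong to `Θ`. -/
  trivial_mem : ∀ A : C, ∃ T ∈ Θ, IsTrivialSgSeq A T
  /-- (RN1)(c): every morphism extends to a right `(n+2)`-angle. -/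
  extend : ∀ {A B : C} (f : A ⟶ B), ∃ T ∈ Θ, ∃ (h0 : T.obj 0 = A) (h1 : T.obj 1 = B),
    T.map 0 = eqToHom h0 ≫ f ≫ eqToHom h1.symm
  /-- (RN2): `Θ` is closed under left rotation. -/
  rot : ∀ X ∈ Θ, ∀ T, IsRotation X T → T ∈ Θ
  /-- (RN3): commutative squares extend to morphisms of right `(n+2)`-angles. -/
  rn3 : ∀ X Y : SgSeq C Sg n, X ∈ Θ → Y ∈ Θ →
    ∀ (a : X.obj 0 ⟶ Y.obj 0) (b : X.obj 1 ⟶ Y.obj 1), X.map 0 ≫ b = a ≫ Y.map 0 →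
      ∃ f : SgSeqHom X Y, f.hom 0 = a ∧ f.hom 1 = b

/-- A right `(n+2)`-angulated category: (RN1)–(RN3) together with the higher
octahedral axiom (RN4). -/
structure RightAngulated (Sg : C ⥤ C) (n : ℕ) (Θ : Set (SgSeq C Sg n)) extends
    RightAngulatedRN123 Sg n Θ : Prop where
  /-- (RN4): the higher octahedral axiom. -/
  rn4 : ∀ X Y U : SgSeq C Sg n, X ∈ Θ → Y ∈ Θ → U ∈ Θ →
    ∀ (h0 : Y.obj 0 = X.obj 0) (hU0 : U.obj 0 = X.obj 1) (hU1 : U.obj 1 = Y.obj 1),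
    Y.map 0 = eqToHom h0 ≫ X.map 0 ≫ (eqToHom hU0.symm ≫ U.map 0 ≫ eqToHom hU1) →
    ∃ (φ : ∀ i, X.obj i ⟶ Y.obj i) (ψ : ∀ i, Y.obj i ⟶ U.obj i)
      (φ' : ∀ i, X.obj (i + 1) ⟶ U.obj i),
      φ 0 = eqToHom h0.symm ∧
      φ 1 = eqToHom hU0.symm ≫ U.map 0 ≫ eqToHom hU1 ∧
      (∀ i, i ≤ n → X.map i ≫ φ (i + 1) = φ i ≫ Y.map i) ∧
      (φ (n + 1) ≫ Y.ext ≫ eqToHom (congrArg Sg.obj h0) = X.ext) ∧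
      (ψ (n + 1) ≫ U.ext ≫ eqToHom (congrArg Sg.obj hU0) =
        Y.ext ≫ eqToHom (congrArg Sg.obj h0) ≫ Sg.map (X.map 0)) ∧
      ∃ V ∈ Θ, ∃ (hV0 : V.obj 0 = X.obj 2)
        (hV1 : 2 ≤ n → V.obj 1 = (X.obj 3 ⊞ Y.obj 2))
        (hVmid : ∀ i, 2 ≤ i → i + 1 ≤ n → V.obj i = ((X.obj (i + 2) ⊞ Y.obj (i + 1)) ⊞ U.obj i))
        (hVn : ∀ j, j = n → 2 ≤ n → V.obj j = (Y.obj (j + 1) ⊞ U.obj j))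
        (hVl : V.obj (n + 1) = U.obj (n + 1)),
        (∀ h : 2 ≤ n, V.map 0 =
          eqToHom hV0 ≫ biprod.lift (X.map 2) (φ 2) ≫ eqToHom (hV1 h).symm) ∧
        (∀ h : 3 ≤ n, V.map 1 = eqToHom (hV1 (by omega)) ≫
          biprod.desc (biprod.lift (biprod.lift (-(X.map 3)) (φ 3)) (φ' 2))
            (biprod.lift (biprod.lift 0 (-(Y.map 2))) (ψ 2)) ≫
          eqToHom (hVmid 2 le_rfl h).symm) ∧
        (∀ i (h2 : 2 ≤ i) (hn : i + 2 ≤ n), V.map i =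
          eqToHom (hVmid i (by omega) (by omega)) ≫
          biprod.desc
            (biprod.desc
              (biprod.lift (biprod.lift (-(X.map (i + 2))) (((-1 : ℤ) ^ (i + 1)) • φ (i + 2))) (φ' (i + 1)))
              (biprod.lift (biprod.lift 0 (-(Y.map (i + 1)))) (ψ (i + 1))))
            (biprod.lift (biprod.lift 0 0) (U.map i)) ≫
          eqToHom (hVmid (i + 1) (by omega) (by omega)).symm) ∧
        (∀ h : n = 2, V.map 1 = eqToHom (hV1 (by omega)) ≫
          biprod.desc (biprod.lift (φ 3) (φ' 2)) (biprod.lift (-(Y.map 2)) (ψ 2)) ≫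
          eqToHom (hVn 2 h.symm (by omega)).symm) ∧
        (∀ i (h2 : 2 ≤ i) (hn : i + 1 = n), V.map i =
          eqToHom (hVmid i (by omega) (by omega)) ≫
          biprod.desc
            (biprod.desc
              (biprod.lift (((-1 : ℤ) ^ (i + 1)) • φ (i + 2)) (φ' (i + 1)))
              (biprod.lift (-(Y.map (i + 1))) (ψ (i + 1))))
            (biprod.lift 0 (U.map i)) ≫
          eqToHom (hVn (i + 1) (by omega) (by omega)).symm) ∧
        (∀ j (hj : j = n) (hn : 2 ≤ n), V.map j =
          eqToHom (hVn j hj hn) ≫ biprod.desc (ψ (j + 1)) (U.map j) ≫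
          eqToHom (show U.obj (j + 1) = V.obj (j + 1) from by rw [hj]; exact hVl.symm)) ∧
        (V.ext = eqToHom hVl ≫ U.ext ≫ eqToHom (congrArg Sg.obj hU0) ≫
          Sg.map (X.map 1) ≫ eqToHom (congrArg Sg.obj hV0).symm) ∧
        (∀ h : n = 1, ∃ e1 : V.obj 1 = Y.obj 2,
          V.map 0 = eqToHom hV0 ≫ φ 2 ≫ eqToHom e1.symm ∧
          V.map 1 = eqToHom e1 ≫ ψ 2 ≫
            eqToHom (show U.obj 2 = V.obj 2 from by
              rw [show (2 : ℕ) = n + 1 from by omega]; exact hVl.symm))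

/-- An `(n+2)`-angulated category in the sense of Geiss–Keller–Oppermann:
in addition to being right `(n+2)`-angulated, the suspension is an equivalence,
and `Θ` is closed under direct summands and inverse rotation. -/
structure Angulated (Sg : C ⥤ C) (n : ℕ) (Θ : Set (SgSeq C Sg n)) extends
    RightAngulated Sg n Θ : Prop where
  sg_equiv : Sg.IsEquivalence
  sg_additive : Sg.Additive
  rot_rev : ∀ X T : SgSeq C Sg n, IsRotation X T → T ∈ Θ → X ∈ Θ
  summand_closed : ∀ X Y U : SgSeq C Sg n, IsBiprodSgSeq X Y U → U ∈ Θ → X ∈ Θ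

end Angulated

/-! A good lift `(h, …, id)` of the morphism of extensions `(h, id) : ρ ⟶ h_* ρ`, supplied by
(EA2ᵒᵖ), has a mapping cocone whose first differential is `[-α; h]`, where `α` is the first
differential of the realization of `ρ`; the cocone is distinguished, so `[-α; h]` is an
inflation. -/

namespace ExData

variable {n : ℕ} {C : Type u} [Category.{v} C] [Preadditive C] (S : ExData n C)

@[simp]
lemma push_id {Cc A : C} (δ : S.Ext Cc A) : S.push (𝟙 A) δ = δ := by
  simp [push]

lemma push_pull {Cc' Cc A A' : C} (c : Cc' ⟶ Cc) (a : A ⟶ A') (δ : S.Ext Cc A) :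
    S.push a (S.pull c δ) = S.pull c (S.push a δ) := by
  have := ConcreteCategory.congr_hom ((S.E.map c.op).naturality a) δ
  simp only [CategoryTheory.comp_apply] at this
  exact this.symm

end ExData

section Cocone

variable {n : ℕ} {C : Type u} [Category.{v} C] [Preadditive C] [HasBinaryBiproducts C]
  {S : ExData n C}

lemma IsCocone.isInflation {Y X N : ExSeq C} {g : ExSeqHom n Y X} (hN : IsCocone n g N)
    {δ : S.Ext (N.obj (n + 1)) (N.obj 0)} (hδ : S.Dist N δ) (hn : 0 < n) :
    S.IsInflation (biprod.lift (-(Y.map 0)) (g.hom 0)) :=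
  ⟨N, δ, hδ, hN.h0, hN.hmid 0 hn, hN.map0 hn⟩

lemma IsExangulated.exists_cocone_push (hS : IsExangulated S) {Y : ExSeq C}
    {ρ : S.Ext (Y.obj (n + 1)) (Y.obj 0)} (hρ : S.Dist Y ρ) {A' : C} (a : Y.obj 0 ⟶ A') :
    ∃ (X : ExSeq C) (hX : X.obj 0 = A') (g : ExSeqHom n Y X) (N : ExSeq C)
      (δ : S.Ext (N.obj (n + 1)) (N.obj 0)),
      g.hom 0 = a ≫ eqToHom hX.symm ∧ IsCocone n g N ∧ S.Dist N δ := by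
  obtain ⟨X, rfl, hC, hX⟩ := hS.realize A' (Y.obj (n + 1)) (S.push a ρ)
  have hX' : S.Dist X (S.push a (S.pull (eqToHom hC) ρ)) := by
    rw [S.push_pull]
    simpa only [eqToHom_refl, S.push_id] using hX
  obtain ⟨g, hg0, -, N, hN, hNdist⟩ := hS.ea2op Y X ρ hC.symm a hρ hX'
  exact ⟨X, rfl, g, N, _, by simpa only [eqToHom_refl, Category.comp_id] using hg0, hN, hNdist⟩

end Cocone

theorem inflation_lift_neg_general
    {n : ℕ} (hn : 0 < n) {C : Type u} [Category.{v} C] [Preadditive C]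
    [HasBinaryBiproducts C]
    (S : ExData n C) (hS : IsExangulated S)
    {A B D : C} (α : A ⟶ B) (h : A ⟶ D) (hα : S.IsInflation α) :
    S.IsInflation (biprod.lift (-α) h) := by
  obtain ⟨Y, ρ, hρ, rfl, rfl, hYα⟩ := hα
  obtain ⟨X, rfl, g, N, δ, hg, hN, hδ⟩ := hS.exists_cocone_push hρ h
  simp only [eqToHom_refl, Category.id_comp, Category.comp_id] at hYα hg
  exact hYα ▸ hg ▸ hN.isInflation hδ hn

/-- If `α : A ⟶ B` is an inflation, then for any `h : A ⟶ D`
the morphism `[-α; h] : A ⟶ B ⊞ D` is also an inflation. -/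
theorem inflation_lift_neg
    {n : ℕ} (hn : 0 < n) {C : Type u} [Category.{v} C] [Preadditive C]
    [HasZeroObject C] [HasBinaryBiproducts C]
    (S : ExData n C) (hS : IsExangulated S)
    {A B D : C} (α : A ⟶ B) (h : A ⟶ D) (hα : S.IsInflation α) :
    S.IsInflation (biprod.lift (-α) h) :=
  inflation_lift_neg_general hn S hS α h hα
end

section
/- Let C be a triangulated category (with shift functor Σ) whose idempotents split, and let X be a full additive subcategory of C such that: (1) Hom_C(X, ΣX') = 0 for all X, X' ∈ X; and (2) every object C of C fits into a distinguished triangle X_0 → X_1 → C → ΣX_0 with X_0, X_1 ∈ X and into a distinguished triangle C → X'_1 → X'_2 → ΣC with X'_1, X'_2 ∈ X. Then the quotient category C/X is an abelian category. (This is the case n = 1 of the main theorem, specialized to triangulated categories.) -/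
open CategoryTheory CategoryTheory.Limits Opposite ZeroObject

universe v u

/-!
Write `[𝒳]` for the ideal of morphisms factoring through `𝒳`. Since `Hom(𝒳, 𝒳⟦1⟧) = 0`, the
triangles `A → X'₁ → X'₂ → A⟦1⟧` and `X₀ → X₁ → B → X₀⟦1⟧` of the hypotheses are a left and a
right `𝒳`-approximation of `A` and `B`, and `s : W → B` lies in `[𝒳]` iff it kills `B → X₀⟦1⟧`.

For a distinguished triangle `A →φ E →g Z →h A⟦1⟧` with `φ` `𝒳`-monic, `ḡ` is a cokernel of `φ̄`
in `C/𝒳`. It is a weak cokernel because a map killing `φ` modulo `[𝒳]` kills it after a correction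
in `[𝒳]`. It is epic: if `g ≫ s ∈ [𝒳]` with `s : Z → B`, then `s ≫ (B → X₀⟦1⟧)` vanishes on `g`,
so it equals `h ≫ e⟦1⟧` with `e : A → X₀`, which factors through `φ`, and `h ≫ φ⟦1⟧ = 0`.
Dually, when the second map of a triangle is `𝒳`-epic, the first one becomes a kernel.

Every `f : A → B` is `𝒳`-monic after adding a left approximation `α`, as `(f, α) : A → B ⊞ X'₁`,
and `B ⊞ X'₁ ≅ B` in `C/𝒳`: this gives cokernels, and dually kernels. In a triangle
`K →k A →f B →h K⟦1⟧`, if `f̄` is mono then `k ∈ [𝒳]`, so `h` is `𝒳`-epic and `f̄` is the kernel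
of `h̄`; if `f̄` is epi then `h ∈ [𝒳]`, so `k` is `𝒳`-monic and `f̄` is the cokernel of `k̄`.
-/

theorem CategoryTheory.Pretriangulated.Triangle.yoneda_exact₁ {C : Type u} [Category.{v} C]
    [Preadditive C] [HasZeroObject C] [HasShift C ℤ]
    [∀ i : ℤ, (CategoryTheory.shiftFunctor C i).Additive] [Pretriangulated C]
    (T : Triangle C) (hT : T ∈ distTriang C) {X : C} (f : T.obj₁ ⟶ X)
    (hf : T.mor₃ ≫ f⟦(1 : ℤ)⟧' = 0) : ∃ g : T.obj₂ ⟶ X, f = T.mor₁ ≫ g := by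
  obtain ⟨g, hg⟩ : ∃ g : T.obj₂⟦(1 : ℤ)⟧ ⟶ X⟦(1 : ℤ)⟧, f⟦(1 : ℤ)⟧' = (-T.mor₁⟦1⟧') ≫ g :=
    yoneda_exact₃ _ (rot_of_distTriang _ hT) _ hf
  refine ⟨-(CategoryTheory.shiftFunctor C (1 : ℤ)).preimage g,
    (CategoryTheory.shiftFunctor C (1 : ℤ)).map_injective ?_⟩
  simp [hg]

section Quotient

variable {C : Type u} [Category.{v} C] [Preadditive C] [HasZeroObject C]
  [HasBinaryBiproducts C] (𝒳 : AddSubcat C)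

lemma quotFunctor_map_eq_zero_iff {A B : C} (f : A ⟶ B) :
    (quotFunctor 𝒳).map f = 0 ↔ f ∈ homIdeal 𝒳 A B :=
  QuotientAddGroup.eq_zero_iff f

lemma quotFunctor_map_eq_iff {A B : C} (f g : A ⟶ B) :
    (quotFunctor 𝒳).map f = (quotFunctor 𝒳).map g ↔ f - g ∈ homIdeal 𝒳 A B :=
  QuotientAddGroup.eq_iff_sub_mem

lemma quotFunctor_map_comp_eq_zero {A B D : C} {f : A ⟶ B} {g : B ⟶ D} (h : f ≫ g = 0) :
    (quotFunctor 𝒳).map f ≫ (quotFunctor 𝒳).map g = 0 := by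
  rw [← CategoryTheory.Functor.map_comp, h, quotFunctor_map_eq_zero_iff]
  exact zero_mem _

lemma quotFunctor_obj_surjective : Function.Surjective (quotFunctor 𝒳).obj :=
  fun P => ⟨P.as, rfl⟩

instance : (quotFunctor 𝒳).Full where
  map_surjective f := ⟨Quotient.out f, Quotient.out_eq f⟩

lemma isZero_quotFunctor_obj {M : C} (hM : 𝒳.mem M) : IsZero ((quotFunctor 𝒳).obj M) := by
  rw [IsZero.iff_id_eq_zero, ← CategoryTheory.Functor.map_id, quotFunctor_map_eq_zero_iff]
  exact ⟨M, hM, 𝟙 M, 𝟙 M, Category.id_comp _⟩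

instance : HasZeroObject (QuotObj 𝒳) :=
  ⟨⟨_, isZero_quotFunctor_obj 𝒳 (𝒳.zero_mem 0 (isZero_zero C))⟩⟩

lemma isIso_quotFunctor_map_biprod_inl {A M : C} (hM : 𝒳.mem M) :
    IsIso ((quotFunctor 𝒳).map (biprod.inl : A ⟶ A ⊞ M)) := by
  refine ⟨(quotFunctor 𝒳).map biprod.fst, by rw [← CategoryTheory.Functor.map_comp,
    biprod.inl_fst, CategoryTheory.Functor.map_id], ?_⟩
  rw [← CategoryTheory.Functor.map_comp, ← CategoryTheory.Functor.map_id,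
    quotFunctor_map_eq_iff]
  exact ⟨M, hM, -biprod.snd, biprod.inr, by
    rw [← biprod.total, sub_add_cancel_left, Preadditive.neg_comp]⟩

lemma isIso_quotFunctor_map_biprod_fst {A M : C} (hM : 𝒳.mem M) :
    IsIso ((quotFunctor 𝒳).map (biprod.fst : A ⊞ M ⟶ A)) := by
  have := isIso_quotFunctor_map_biprod_inl 𝒳 (A := A) hM
  have : IsIso ((quotFunctor 𝒳).map (biprod.inl : A ⟶ A ⊞ M) ≫
      (quotFunctor 𝒳).map biprod.fst) := by
    rw [← CategoryTheory.Functor.map_comp, biprod.inl_fst, CategoryTheory.Functor.map_id]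
    infer_instance
  exact IsIso.of_isIso_comp_left ((quotFunctor 𝒳).map biprod.inl) _

lemma epi_quotFunctor_map {B Z : C} {c : B ⟶ Z}
    (hc : ∀ (W : C) (s : Z ⟶ W), c ≫ s ∈ homIdeal 𝒳 B W → s ∈ homIdeal 𝒳 Z W) :
    Epi ((quotFunctor 𝒳).map c) := by
  refine Preadditive.epi_of_cancel_zero _ fun {P} g hg => ?_
  obtain ⟨W, rfl⟩ := quotFunctor_obj_surjective 𝒳 P
  obtain ⟨s, rfl⟩ := (quotFunctor 𝒳).map_surjective g
  rw [← CategoryTheory.Functor.map_comp, quotFunctor_map_eq_zero_iff] at hg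
  exact (quotFunctor_map_eq_zero_iff 𝒳 s).mpr (hc _ s hg)

lemma mono_quotFunctor_map {K A : C} {k : K ⟶ A}
    (hk : ∀ (W : C) (s : W ⟶ K), s ≫ k ∈ homIdeal 𝒳 W A → s ∈ homIdeal 𝒳 W K) :
    Mono ((quotFunctor 𝒳).map k) := by
  refine Preadditive.mono_of_cancel_zero _ fun {P} g hg => ?_
  obtain ⟨W, rfl⟩ := quotFunctor_obj_surjective 𝒳 P
  obtain ⟨s, rfl⟩ := (quotFunctor 𝒳).map_surjective g
  rw [← CategoryTheory.Functor.map_comp, quotFunctor_map_eq_zero_iff] at hg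
  exact (quotFunctor_map_eq_zero_iff 𝒳 s).mpr (hk _ s hg)

lemma exists_quotFunctor_map_comp_eq {A B Z : C} {f : A ⟶ B} {c : B ⟶ Z}
    (hfc : ∀ (W : C) (t : B ⟶ W), f ≫ t ∈ homIdeal 𝒳 A W →
      ∃ s : Z ⟶ W, t - c ≫ s ∈ homIdeal 𝒳 B W)
    {P : QuotObj 𝒳} (t : (quotFunctor 𝒳).obj B ⟶ P) (ht : (quotFunctor 𝒳).map f ≫ t = 0) :
    ∃ s, (quotFunctor 𝒳).map c ≫ s = t := by
  obtain ⟨W, rfl⟩ := quotFunctor_obj_surjective 𝒳 P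
  obtain ⟨t, rfl⟩ := (quotFunctor 𝒳).map_surjective t
  rw [← CategoryTheory.Functor.map_comp, quotFunctor_map_eq_zero_iff] at ht
  obtain ⟨s, hs⟩ := hfc W t ht
  exact ⟨(quotFunctor 𝒳).map s, by
    rw [← CategoryTheory.Functor.map_comp, eq_comm, quotFunctor_map_eq_iff]; exact hs⟩

lemma exists_comp_quotFunctor_map_eq {K A B : C} {k : K ⟶ A} {f : A ⟶ B}
    (hkf : ∀ (W : C) (t : W ⟶ A), t ≫ f ∈ homIdeal 𝒳 W B →
      ∃ s : W ⟶ K, t - s ≫ k ∈ homIdeal 𝒳 W A)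
    {P : QuotObj 𝒳} (t : P ⟶ (quotFunctor 𝒳).obj A) (ht : t ≫ (quotFunctor 𝒳).map f = 0) :
    ∃ s, s ≫ (quotFunctor 𝒳).map k = t := by
  obtain ⟨W, rfl⟩ := quotFunctor_obj_surjective 𝒳 P
  obtain ⟨t, rfl⟩ := (quotFunctor 𝒳).map_surjective t
  rw [← CategoryTheory.Functor.map_comp, quotFunctor_map_eq_zero_iff] at ht
  obtain ⟨s, hs⟩ := hkf W t ht
  exact ⟨(quotFunctor 𝒳).map s, by
    rw [← CategoryTheory.Functor.map_comp, eq_comm, quotFunctor_map_eq_iff]; exact hs⟩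

noncomputable def isColimitCokernelCofork {A B Z : C} {f : A ⟶ B} {c : B ⟶ Z}
    (w : (quotFunctor 𝒳).map f ≫ (quotFunctor 𝒳).map c = 0)
    (hc : ∀ (W : C) (s : Z ⟶ W), c ≫ s ∈ homIdeal 𝒳 B W → s ∈ homIdeal 𝒳 Z W)
    (hfc : ∀ (W : C) (t : B ⟶ W), f ≫ t ∈ homIdeal 𝒳 A W →
      ∃ s : Z ⟶ W, t - c ≫ s ∈ homIdeal 𝒳 B W) :
    IsColimit (CokernelCofork.ofπ _ w) :=
  have := epi_quotFunctor_map 𝒳 hc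
  CokernelCofork.IsColimit.ofπ' _ w fun t ht =>
    ⟨_, (exists_quotFunctor_map_comp_eq 𝒳 hfc t ht).choose_spec⟩

noncomputable def isLimitKernelFork {K A B : C} {k : K ⟶ A} {f : A ⟶ B}
    (w : (quotFunctor 𝒳).map k ≫ (quotFunctor 𝒳).map f = 0)
    (hk : ∀ (W : C) (s : W ⟶ K), s ≫ k ∈ homIdeal 𝒳 W A → s ∈ homIdeal 𝒳 W K)
    (hkf : ∀ (W : C) (t : W ⟶ A), t ≫ f ∈ homIdeal 𝒳 W B →
      ∃ s : W ⟶ K, t - s ≫ k ∈ homIdeal 𝒳 W A) :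
    IsLimit (KernelFork.ofι _ w) :=
  have := mono_quotFunctor_map 𝒳 hk
  KernelFork.IsLimit.ofι' _ w fun t ht =>
    ⟨_, (exists_comp_quotFunctor_map_eq 𝒳 hkf t ht).choose_spec⟩

lemma XMonic.of_comp {A B D : C} {f : A ⟶ B} {g : B ⟶ D} (h : XMonic 𝒳 (f ≫ g)) :
    XMonic 𝒳 f := fun M hM u => by
  obtain ⟨v, hv⟩ := h M hM u
  exact ⟨g ≫ v, by rw [← hv, Category.assoc]⟩

lemma XEpic.of_comp {A B D : C} {f : A ⟶ B} {g : B ⟶ D} (h : XEpic 𝒳 (f ≫ g)) :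
    XEpic 𝒳 g := fun M hM u => by
  obtain ⟨v, hv⟩ := h M hM u
  exact ⟨v ≫ f, by rw [← hv, Category.assoc]⟩

lemma XMonic.exists_eq_comp_of_mem {A E W : C} {φ : A ⟶ E} (hφ : XMonic 𝒳 φ) {u : A ⟶ W}
    (hu : u ∈ homIdeal 𝒳 A W) : ∃ u' ∈ homIdeal 𝒳 E W, u = φ ≫ u' := by
  obtain ⟨M, hM, a, b, rfl⟩ := hu
  obtain ⟨a', rfl⟩ := hφ M hM a
  exact ⟨a' ≫ b, ⟨M, hM, a', b, rfl⟩, Category.assoc _ _ _⟩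

lemma XEpic.exists_eq_comp_of_mem {W E B : C} {ψ : E ⟶ B} (hψ : XEpic 𝒳 ψ) {u : W ⟶ B}
    (hu : u ∈ homIdeal 𝒳 W B) : ∃ u' ∈ homIdeal 𝒳 W E, u = u' ≫ ψ := by
  obtain ⟨M, hM, a, b, rfl⟩ := hu
  obtain ⟨b', rfl⟩ := hψ M hM b
  exact ⟨a ≫ b', ⟨M, hM, a, b', rfl⟩, (Category.assoc _ _ _).symm⟩

end Quotient

section Pretriangulated

open Pretriangulated

variable {C : Type u} [Category.{v} C] [Preadditive C] [HasZeroObject C]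
  [HasBinaryBiproducts C] [HasShift C ℤ] (𝒳 : AddSubcat C)
  (h𝒳 : ∀ X X' : C, 𝒳.mem X → 𝒳.mem X' → ∀ f : X ⟶ X'⟦(1 : ℤ)⟧, f = 0)

include h𝒳 in
lemma comp_eq_zero_of_mem_homIdeal {Z W X₀ : C} (hX₀ : 𝒳.mem X₀) {s : Z ⟶ W}
    (hs : s ∈ homIdeal 𝒳 Z W) (δ : W ⟶ X₀⟦(1 : ℤ)⟧) : s ≫ δ = 0 := by
  obtain ⟨M, hM, a, b, rfl⟩ := hs
  rw [Category.assoc, h𝒳 M X₀ hM hX₀ (b ≫ δ), comp_zero]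

include h𝒳 in
lemma comp_shift_map_eq_zero_of_mem_homIdeal {Y Z W : C} (hY : 𝒳.mem Y) {s : Z ⟶ W}
    (hs : s ∈ homIdeal 𝒳 Z W) (γ : Y ⟶ Z⟦(1 : ℤ)⟧) : γ ≫ s⟦(1 : ℤ)⟧' = 0 := by
  obtain ⟨M, hM, a, b, rfl⟩ := hs
  rw [Functor.map_comp, ← Category.assoc, h𝒳 Y M hY hM (γ ≫ a⟦(1 : ℤ)⟧'), zero_comp]

variable [∀ i : ℤ, (shiftFunctor C i).Additive] [Pretriangulated C]
  (hright : ∀ Cc : C, ∃ T : Triangle C, T ∈ distinguishedTriangles ∧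
    𝒳.mem T.obj₁ ∧ 𝒳.mem T.obj₂ ∧ T.obj₃ = Cc)
  (hleft : ∀ Cc : C, ∃ T : Triangle C, T ∈ distinguishedTriangles ∧
    T.obj₁ = Cc ∧ 𝒳.mem T.obj₂ ∧ 𝒳.mem T.obj₃)

lemma xEpic_mor₂ {T : Triangle C} (hT : T ∈ distTriang C)
    (h : ∀ M : C, 𝒳.mem M → ∀ v : M ⟶ T.obj₃, v ≫ T.mor₃ = 0) : XEpic 𝒳 T.mor₂ :=
  fun M hM v => by
    obtain ⟨g, hg⟩ := Triangle.coyoneda_exact₃ _ hT v (h M hM v)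
    exact ⟨g, hg.symm⟩

lemma xMonic_mor₁ {T : Triangle C} (hT : T ∈ distTriang C)
    (h : ∀ M : C, 𝒳.mem M → ∀ u : T.obj₁ ⟶ M, T.mor₃ ≫ u⟦(1 : ℤ)⟧' = 0) :
    XMonic 𝒳 T.mor₁ :=
  fun M hM u => by
    obtain ⟨g, hg⟩ := Triangle.yoneda_exact₁ _ hT u (h M hM u)
    exact ⟨g, hg.symm⟩

lemma mem_homIdeal_of_comp_mor₃_eq_zero {T : Triangle C} (hT : T ∈ distTriang C)
    (h₂ : 𝒳.mem T.obj₂) {Z : C} {s : Z ⟶ T.obj₃} (hs : s ≫ T.mor₃ = 0) :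
    s ∈ homIdeal 𝒳 Z T.obj₃ := by
  obtain ⟨g, hg⟩ := Triangle.coyoneda_exact₃ _ hT s hs
  exact ⟨_, h₂, g, T.mor₂, hg.symm⟩

lemma mem_homIdeal_of_mor₃_comp_shift_map_eq_zero {T : Triangle C} (hT : T ∈ distTriang C)
    (h₂ : 𝒳.mem T.obj₂) {W : C} {s : T.obj₁ ⟶ W} (hs : T.mor₃ ≫ s⟦(1 : ℤ)⟧' = 0) :
    s ∈ homIdeal 𝒳 T.obj₁ W := by
  obtain ⟨g, hg⟩ := Triangle.yoneda_exact₁ _ hT s hs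
  exact ⟨_, h₂, T.mor₁, g, hg.symm⟩

include h𝒳 hleft in
lemma exists_leftApprox (A : C) : ∃ (X₁ : C) (α : A ⟶ X₁), LeftApprox 𝒳 α := by
  obtain ⟨T, hT, rfl, h₂, h₃⟩ := hleft A
  exact ⟨_, T.mor₁, h₂, xMonic_mor₁ 𝒳 hT fun M hM u => h𝒳 _ M h₃ hM _⟩

include h𝒳 hright in
lemma exists_rightApprox (B : C) : ∃ (X₁ : C) (π : X₁ ⟶ B), RightApprox 𝒳 π := by
  obtain ⟨T, hT, h₁, h₂, rfl⟩ := hright B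
  exact ⟨_, T.mor₂, h₂, xEpic_mor₂ 𝒳 hT fun M hM v => h𝒳 M _ hM h₁ _⟩

include h𝒳 hright in
lemma mem_homIdeal_of_mor₂_comp_mem {T : Triangle C} (hT : T ∈ distTriang C)
    (hT₁ : XMonic 𝒳 T.mor₁) (W : C) (s : T.obj₃ ⟶ W)
    (hs : T.mor₂ ≫ s ∈ homIdeal 𝒳 T.obj₂ W) : s ∈ homIdeal 𝒳 T.obj₃ W := by
  obtain ⟨T', hT', h₁, h₂, rfl⟩ := hright W
  apply mem_homIdeal_of_comp_mor₃_eq_zero 𝒳 hT' h₂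
  obtain ⟨e, he⟩ := Triangle.yoneda_exact₃ _ hT (s ≫ T'.mor₃) (by
    rw [← Category.assoc]; exact comp_eq_zero_of_mem_homIdeal 𝒳 h𝒳 h₁ hs _)
  obtain ⟨e₁, he₁⟩ := hT₁ _ h₁ ((shiftFunctor C (1 : ℤ)).preimage e)
  rw [he, ← (shiftFunctor C (1 : ℤ)).map_preimage e, ← he₁, Functor.map_comp,
    ← Category.assoc, comp_distTriang_mor_zero₃₁ _ hT, zero_comp]

include h𝒳 hleft in
lemma mem_homIdeal_of_comp_mor₁_mem {T : Triangle C} (hT : T ∈ distTriang C)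
    (hT₂ : XEpic 𝒳 T.mor₂) (W : C) (s : W ⟶ T.obj₁)
    (hs : s ≫ T.mor₁ ∈ homIdeal 𝒳 W T.obj₂) : s ∈ homIdeal 𝒳 W T.obj₁ := by
  obtain ⟨T', hT', rfl, h₂, h₃⟩ := hleft W
  apply mem_homIdeal_of_mor₃_comp_shift_map_eq_zero 𝒳 hT' h₂
  obtain ⟨e, he⟩ := Triangle.coyoneda_exact₁ _ hT (T'.mor₃ ≫ s⟦(1 : ℤ)⟧') (by
    rw [Category.assoc, ← Functor.map_comp]
    exact comp_shift_map_eq_zero_of_mem_homIdeal 𝒳 h𝒳 h₃ hs _)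
  obtain ⟨e₁, rfl⟩ := hT₂ _ h₃ e
  rw [he, Category.assoc, comp_distTriang_mor_zero₂₃ _ hT, comp_zero]

lemma exists_sub_mor₂_comp_mem {T : Triangle C} (hT : T ∈ distTriang C)
    (hT₁ : XMonic 𝒳 T.mor₁) (W : C) (t : T.obj₂ ⟶ W)
    (ht : T.mor₁ ≫ t ∈ homIdeal 𝒳 T.obj₁ W) :
    ∃ s : T.obj₃ ⟶ W, t - T.mor₂ ≫ s ∈ homIdeal 𝒳 T.obj₂ W := by
  obtain ⟨u, hu, htu⟩ := hT₁.exists_eq_comp_of_mem 𝒳 ht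
  obtain ⟨s, hs⟩ := Triangle.yoneda_exact₂ _ hT (t - u) (by
    rw [Preadditive.comp_sub, htu, sub_self])
  exact ⟨s, by rwa [← hs, sub_sub_cancel]⟩

lemma exists_sub_comp_mor₁_mem {T : Triangle C} (hT : T ∈ distTriang C)
    (hT₂ : XEpic 𝒳 T.mor₂) (W : C) (t : W ⟶ T.obj₂)
    (ht : t ≫ T.mor₂ ∈ homIdeal 𝒳 W T.obj₃) :
    ∃ s : W ⟶ T.obj₁, t - s ≫ T.mor₁ ∈ homIdeal 𝒳 W T.obj₂ := by
  obtain ⟨u, hu, htu⟩ := hT₂.exists_eq_comp_of_mem 𝒳 ht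
  obtain ⟨s, hs⟩ := Triangle.coyoneda_exact₂ _ hT (t - u) (by
    rw [Preadditive.sub_comp, htu, sub_self])
  exact ⟨s, by rwa [← hs, sub_sub_cancel]⟩

noncomputable def isColimitCokernelCoforkMor₂ {T : Triangle C} (hT : T ∈ distTriang C)
    (hT₁ : XMonic 𝒳 T.mor₁) :
    IsColimit (CokernelCofork.ofπ _ (quotFunctor_map_comp_eq_zero 𝒳
      (comp_distTriang_mor_zero₁₂ _ hT))) :=
  isColimitCokernelCofork 𝒳 _ (mem_homIdeal_of_mor₂_comp_mem 𝒳 h𝒳 hright hT hT₁)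
    (exists_sub_mor₂_comp_mem 𝒳 hT hT₁)

noncomputable def isLimitKernelForkMor₁ {T : Triangle C} (hT : T ∈ distTriang C)
    (hT₂ : XEpic 𝒳 T.mor₂) :
    IsLimit (KernelFork.ofι _ (quotFunctor_map_comp_eq_zero 𝒳
      (comp_distTriang_mor_zero₁₂ _ hT))) :=
  isLimitKernelFork 𝒳 _ (mem_homIdeal_of_comp_mor₁_mem 𝒳 h𝒳 hleft hT hT₂)
    (exists_sub_comp_mor₁_mem 𝒳 hT hT₂)

include h𝒳 hright hleft in
lemma hasCokernels_quotObj : HasCokernels (QuotObj 𝒳) where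
  has_colimit {P R} φ := by
    obtain ⟨A, rfl⟩ := quotFunctor_obj_surjective 𝒳 P
    obtain ⟨B, rfl⟩ := quotFunctor_obj_surjective 𝒳 R
    obtain ⟨f, rfl⟩ := (quotFunctor 𝒳).map_surjective φ
    obtain ⟨X₁, α, hX₁, hα⟩ := exists_leftApprox 𝒳 h𝒳 hleft A
    have hφ : XMonic 𝒳 (biprod.lift f α) :=
      XMonic.of_comp 𝒳 (g := biprod.snd) (by rwa [biprod.lift_snd])
    obtain ⟨Z, g, h, hT⟩ := distinguished_cocone_triangle (biprod.lift f α)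
    have : HasCokernel ((quotFunctor 𝒳).map (biprod.lift f α)) :=
      HasColimit.mk ⟨_, isColimitCokernelCoforkMor₂ 𝒳 h𝒳 hright hT hφ⟩
    have := isIso_quotFunctor_map_biprod_fst 𝒳 (A := B) hX₁
    rw [← biprod.lift_fst f α, Functor.map_comp]
    infer_instance

include h𝒳 hright hleft in
lemma hasKernels_quotObj : HasKernels (QuotObj 𝒳) where
  has_limit {P R} φ := by
    obtain ⟨A, rfl⟩ := quotFunctor_obj_surjective 𝒳 P
    obtain ⟨B, rfl⟩ := quotFunctor_obj_surjective 𝒳 R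
    obtain ⟨f, rfl⟩ := (quotFunctor 𝒳).map_surjective φ
    obtain ⟨X₁, π, hX₁, hπ⟩ := exists_rightApprox 𝒳 h𝒳 hright B
    have hψ : XEpic 𝒳 (biprod.desc f π) :=
      XEpic.of_comp 𝒳 (f := biprod.inr) (by rwa [biprod.inr_desc])
    obtain ⟨K, k, h, hT⟩ := distinguished_cocone_triangle₁ (biprod.desc f π)
    have : HasKernel ((quotFunctor 𝒳).map (biprod.desc f π)) :=
      HasLimit.mk ⟨_, isLimitKernelForkMor₁ 𝒳 h𝒳 hleft hT hψ⟩
    have := isIso_quotFunctor_map_biprod_inl 𝒳 (A := A) hX₁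
    rw [← biprod.inl_desc f π, Functor.map_comp]
    infer_instance

include h𝒳 hleft in
lemma isNormalMonoCategory_quotObj : IsNormalMonoCategory (QuotObj 𝒳) where
  normalMonoOfMono {P R} φ _ := by
    obtain ⟨A, rfl⟩ := quotFunctor_obj_surjective 𝒳 P
    obtain ⟨B, rfl⟩ := quotFunctor_obj_surjective 𝒳 R
    obtain ⟨f, rfl⟩ := (quotFunctor 𝒳).map_surjective φ
    obtain ⟨K, k, h, hT⟩ := distinguished_cocone_triangle₁ f
    have hk : k ∈ homIdeal 𝒳 K A := by
      rw [← quotFunctor_map_eq_zero_iff, ← cancel_mono ((quotFunctor 𝒳).map f), zero_comp]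
      exact quotFunctor_map_comp_eq_zero 𝒳 (comp_distTriang_mor_zero₁₂ _ hT)
    have hR := rot_of_distTriang _ hT
    have hh : XEpic 𝒳 (Triangle.mk k f h).rotate.mor₂ :=
      xEpic_mor₂ 𝒳 hR fun M hM (v : M ⟶ K⟦(1 : ℤ)⟧) =>
        (Preadditive.comp_neg _ _).trans <| neg_eq_zero.mpr <|
          comp_shift_map_eq_zero_of_mem_homIdeal 𝒳 h𝒳 hM hk v
    exact ⟨⟨_, _, _, isLimitKernelForkMor₁ 𝒳 h𝒳 hleft hR hh⟩⟩

include h𝒳 hright in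
lemma isNormalEpiCategory_quotObj : IsNormalEpiCategory (QuotObj 𝒳) where
  normalEpiOfEpi {P R} φ _ := by
    obtain ⟨A, rfl⟩ := quotFunctor_obj_surjective 𝒳 P
    obtain ⟨B, rfl⟩ := quotFunctor_obj_surjective 𝒳 R
    obtain ⟨f, rfl⟩ := (quotFunctor 𝒳).map_surjective φ
    obtain ⟨K, k, h, hT⟩ := distinguished_cocone_triangle₁ f
    have hh : h ∈ homIdeal 𝒳 B (K⟦(1 : ℤ)⟧) := by
      rw [← quotFunctor_map_eq_zero_iff, ← cancel_epi ((quotFunctor 𝒳).map f), comp_zero]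
      exact quotFunctor_map_comp_eq_zero 𝒳 (comp_distTriang_mor_zero₂₃ _ hT)
    have hk : XMonic 𝒳 (Triangle.mk k f h).mor₁ :=
      xMonic_mor₁ 𝒳 hT fun M hM u => comp_eq_zero_of_mem_homIdeal 𝒳 h𝒳 hM hh _
    exact ⟨⟨_, _, _, isColimitCokernelCoforkMor₂ 𝒳 h𝒳 hright hT hk⟩⟩

end Pretriangulated

open CategoryTheory.Pretriangulated in
/-- Let `C` be a triangulated category whose idempotents
split and `𝒳` a cluster tilting subcategory (i.e. `Hom(𝒳, Σ𝒳) = 0` and every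
object sits in distinguished triangles `X₀ → X₁ → C → ΣX₀` and
`C → X'₁ → X'₂ → ΣC` with the `Xᵢ, X'ᵢ` in `𝒳`). Then the quotient `C/𝒳` is an
abelian category. -/
theorem triangulated_quotient_abelian
    {C : Type u} [Category.{v} C] [Preadditive C] [HasZeroObject C]
    [HasBinaryBiproducts C] [HasShift C ℤ]
    [∀ i : ℤ, (shiftFunctor C i).Additive] [Pretriangulated C] [IsTriangulated C]
    (hC : IsIdempotentComplete C) (𝒳 : AddSubcat C)
    (h1 : ∀ X X' : C, 𝒳.mem X → 𝒳.mem X' →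
      ∀ f : X ⟶ (shiftFunctor C (1 : ℤ)).obj X', f = 0)
    (h2 : ∀ Cc : C, ∃ T : Triangle C, T ∈ distinguishedTriangles ∧
      𝒳.mem T.obj₁ ∧ 𝒳.mem T.obj₂ ∧ T.obj₃ = Cc)
    (h3 : ∀ Cc : C, ∃ T : Triangle C, T ∈ distinguishedTriangles ∧
      T.obj₁ = Cc ∧ 𝒳.mem T.obj₂ ∧ 𝒳.mem T.obj₃) :
    Nonempty (Abelian (QuotObj 𝒳)) := by
  have : HasFiniteProducts (QuotObj 𝒳) := hasFiniteProducts_of_has_binary_and_terminal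
  have := hasKernels_quotObj 𝒳 h1 h2 h3
  have := hasCokernels_quotObj 𝒳 h1 h2 h3
  have := isNormalMonoCategory_quotObj 𝒳 h1 h3
  have := isNormalEpiCategory_quotObj 𝒳 h1 h2
  exact ⟨{}⟩
end
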